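/- arXiv:2603.22964 — 2 statements merged into one kernel-verified Lean document; each statement's English description precedes it below -/
import Mathlib

section
/- If for each layer j the perturbed quantity satisfies the recurrence Δ_{j+1} ≤ μ_{j+1}(w_{j+1}+u_{j+1})Δ_j + ν_{j+1}u_{j+1} with Δ_0 = 0, and u_ℓ ≤ w_ℓ/L for all ℓ (with all quantities nonnegative and L ≥ 1), then Δ_L ≤ e · Σ_{j=1}^L [ν_j u_j · Π_{ℓ=j+1}^L μ_ℓ w_ℓ]. -/
/-- Perturbation bound template: solving the layered recurrence
`Δ_{j+1} ≤ μ_{j+1}(w_{j+1}+u_{j+1})Δ_j + ν_{j+1}u_{j+1}` with `Δ_0 = 0` and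
`u_ℓ ≤ w_ℓ/L` yields `Δ_L ≤ e · Σ_{j=1}^L ν_j u_j ∏_{ℓ=j+1}^L μ_ℓ w_ℓ`. -/
theorem stmt_0 (L : ℕ) (hL : 1 ≤ L) (μ ν w u Δ : ℕ → ℝ)
    (hμ : ∀ j, 0 ≤ μ j) (hν : ∀ j, 0 ≤ ν j) (hw : ∀ j, 0 ≤ w j) (hu : ∀ j, 0 ≤ u j)
    (hΔ : ∀ j, 0 ≤ Δ j) (hΔ0 : Δ 0 = 0)
    (hrec : ∀ j < L, Δ (j + 1) ≤ μ (j + 1) * (w (j + 1) + u (j + 1)) * Δ j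
      + ν (j + 1) * u (j + 1))
    (hsmall : ∀ ℓ, u ℓ ≤ w ℓ / L) :
    Δ L ≤ Real.exp 1 *
      ∑ j ∈ Finset.Icc 1 L, (ν j * u j * ∏ ℓ ∈ Finset.Icc (j + 1) L, μ ℓ * w ℓ) := by
  set c : ℝ := 1 + 1 / L with hc
  have hL0 : (0 : ℝ) < L := by positivity
  have hc1 : (1 : ℝ) ≤ c := by
    rw [hc]
    have : (0:ℝ) ≤ 1 / L := by positivity
    linarith
  have hc0 : (0 : ℝ) ≤ c := by linarith
  -- step bound on the coefficient
  have hcoef : ∀ ℓ, μ ℓ * (w ℓ + u ℓ) ≤ c * (μ ℓ * w ℓ) := by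
    intro ℓ
    have h1 : w ℓ + u ℓ ≤ c * w ℓ := by
      have h := hsmall ℓ
      rw [div_eq_mul_inv] at h
      rw [hc]; ring_nf
      linarith
    calc μ ℓ * (w ℓ + u ℓ) ≤ μ ℓ * (c * w ℓ) :=
          mul_le_mul_of_nonneg_left h1 (hμ ℓ)
      _ = c * (μ ℓ * w ℓ) := by ring
  -- main induction
  have key : ∀ k, k ≤ L → Δ k ≤
      ∑ j ∈ Finset.Icc 1 k, (ν j * u j * ∏ ℓ ∈ Finset.Icc (j + 1) k, c * (μ ℓ * w ℓ)) := by
    intro k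
    induction k with
    | zero => intro _; simp [hΔ0]
    | succ k ih =>
      intro hk
      have hkL : k < L := hk
      have ihk := ih (le_of_lt hkL)
      have step : Δ (k + 1) ≤ c * (μ (k+1) * w (k+1)) *
          (∑ j ∈ Finset.Icc 1 k, (ν j * u j * ∏ ℓ ∈ Finset.Icc (j + 1) k, c * (μ ℓ * w ℓ)))
          + ν (k+1) * u (k+1) := by
        have h1 := hrec k hkL
        have h2 : μ (k+1) * (w (k+1) + u (k+1)) * Δ k ≤ c * (μ (k+1) * w (k+1)) * Δ k :=
          mul_le_mul_of_nonneg_right (hcoef (k+1)) (hΔ k)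
        have h3 : c * (μ (k+1) * w (k+1)) * Δ k ≤ c * (μ (k+1) * w (k+1)) *
            (∑ j ∈ Finset.Icc 1 k, (ν j * u j * ∏ ℓ ∈ Finset.Icc (j + 1) k, c * (μ ℓ * w ℓ))) := by
          exact mul_le_mul_of_nonneg_left ihk
            (mul_nonneg hc0 (mul_nonneg (hμ _) (hw _)))
        linarith
      have hsum : ∑ j ∈ Finset.Icc 1 (k+1),
            (ν j * u j * ∏ ℓ ∈ Finset.Icc (j + 1) (k+1), c * (μ ℓ * w ℓ))
          = c * (μ (k+1) * w (k+1)) *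
            (∑ j ∈ Finset.Icc 1 k, (ν j * u j * ∏ ℓ ∈ Finset.Icc (j + 1) k, c * (μ ℓ * w ℓ)))
            + ν (k+1) * u (k+1) := by
        rw [Finset.sum_Icc_succ_top (by omega : 1 ≤ k + 1)]
        simp only [Finset.Icc_self, Finset.Icc_eq_empty_of_lt (by omega : k + 1 + 1 > k + 1)]
        rw [Finset.mul_sum]
        congr 1
        · apply Finset.sum_congr rfl
          intro j hj
          simp only [Finset.mem_Icc] at hj
          rw [Finset.prod_Icc_succ_top (by omega : j + 1 ≤ k + 1)]
          ring
        · simp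
      rw [hsum]; exact step
  have main := key L le_rfl
  -- bound the c-products by e times the plain products
  have hfin : ∑ j ∈ Finset.Icc 1 L, (ν j * u j * ∏ ℓ ∈ Finset.Icc (j + 1) L, c * (μ ℓ * w ℓ))
      ≤ Real.exp 1 * ∑ j ∈ Finset.Icc 1 L, (ν j * u j * ∏ ℓ ∈ Finset.Icc (j + 1) L, μ ℓ * w ℓ) := by
    rw [Finset.mul_sum]
    apply Finset.sum_le_sum
    intro j hj
    simp only [Finset.mem_Icc] at hj
    have hprod : ∏ ℓ ∈ Finset.Icc (j + 1) L, c * (μ ℓ * w ℓ)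
        = c ^ (Finset.Icc (j+1) L).card * ∏ ℓ ∈ Finset.Icc (j + 1) L, μ ℓ * w ℓ := by
      rw [Finset.prod_mul_distrib, Finset.prod_const]
    have hcard : (Finset.Icc (j+1) L).card ≤ L := by
      rw [Nat.card_Icc]; omega
    have hcL : c ^ (Finset.Icc (j+1) L).card ≤ Real.exp 1 := by
      calc c ^ (Finset.Icc (j+1) L).card ≤ c ^ L := pow_le_pow_right₀ hc1 hcard
        _ ≤ Real.exp (1 / L) ^ L := by
            apply pow_le_pow_left₀ hc0
            have := Real.add_one_le_exp (1 / (L:ℝ))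
            linarith
        _ = Real.exp 1 := by
            rw [← Real.exp_nat_mul]
            congr 1
            field_simp
    have hP : 0 ≤ ∏ ℓ ∈ Finset.Icc (j + 1) L, μ ℓ * w ℓ :=
      Finset.prod_nonneg fun ℓ _ => mul_nonneg (hμ ℓ) (hw ℓ)
    calc ν j * u j * ∏ ℓ ∈ Finset.Icc (j + 1) L, c * (μ ℓ * w ℓ)
        = c ^ (Finset.Icc (j+1) L).card *
          (ν j * u j * ∏ ℓ ∈ Finset.Icc (j + 1) L, μ ℓ * w ℓ) := by rw [hprod]; ring
      _ ≤ Real.exp 1 * (ν j * u j * ∏ ℓ ∈ Finset.Icc (j + 1) L, μ ℓ * w ℓ) :=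
          mul_le_mul_of_nonneg_right hcL
            (mul_nonneg (mul_nonneg (hν j) (hu j)) hP)
  linarith
end

section
/- Let x_1,…,x_k be real numbers with each x_i ≥ −1/d and Σ_i x_i = 0, where at most ξ of the x_i are nonzero. Then Σ_i x_i² ≤ ξ(ξ−1)/d². -/
/-- If `x_1,…,x_k` are reals with `x_i ≥ −1/d`, `Σ x_i = 0`, and at most `ξ` of
them nonzero, then `Σ x_i² ≤ ξ(ξ−1)/d²`. -/
theorem stmt_8 (d : ℝ) (hd : 0 < d) (k ξ : ℕ) (hk : 0 < k) (hξ : 1 ≤ ξ) (hξk : ξ ≤ k)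
    (x : Fin k → ℝ) (hx : ∀ i, -(1 / d) ≤ x i) (hsum : ∑ i, x i = 0)
    (hsparse : {i : Fin k | x i ≠ 0}.ncard ≤ ξ) :
    ∑ i, (x i) ^ 2 ≤ (ξ : ℝ) * ((ξ : ℝ) - 1) / d ^ 2 := by
  classical
  set s := Finset.univ.filter (fun i : Fin k => 0 < x i) with hs
  set t := Finset.univ.filter (fun i : Fin k => x i < 0) with ht
  set P := ∑ i ∈ s, x i with hP
  have hPnonneg : 0 ≤ P :=
    Finset.sum_nonneg fun i hi => le_of_lt (by simpa [hs] using hi)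
  have hdisj : Disjoint s t := by
    rw [Finset.disjoint_left]
    intro i h1 h2
    simp only [hs, ht, Finset.mem_filter] at h1 h2
    linarith [h1.2, h2.2]
  have hunion_sum : ∑ i ∈ s ∪ t, x i = 0 := by
    rw [← hsum]
    apply Finset.sum_subset (Finset.subset_univ _)
    intro i _ hi
    simp only [Finset.mem_union, hs, ht, Finset.mem_filter, Finset.mem_univ, true_and,
      not_or, not_lt] at hi
    linarith [hi.1, hi.2]
  have hsumt : ∑ i ∈ t, x i = -P := by
    rw [Finset.sum_union hdisj] at hunion_sum; linarith
  -- cardinality bound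
  have hcard : s.card + t.card ≤ ξ := by
    have h1 : {i : Fin k | x i ≠ 0}.ncard = ((s ∪ t) : Finset (Fin k)).card := by
      rw [← Set.ncard_coe_finset]
      congr 1
      ext i
      simp only [Finset.coe_union, Set.mem_union, Set.mem_setOf_eq, Finset.coe_filter,
        Finset.mem_univ, true_and, hs, ht]
      constructor
      · intro h; rcases lt_or_gt_of_ne h with h' | h'
        · exact Or.inr h'
        · exact Or.inl h'
      · rintro (h | h) <;> [exact ne_of_gt h; exact ne_of_lt h]
    rw [h1, Finset.card_union_of_disjoint hdisj] at hsparse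
    exact hsparse
  -- split sum of squares
  have hsq : ∑ i, (x i) ^ 2 = ∑ i ∈ s ∪ t, (x i) ^ 2 := by
    symm
    apply Finset.sum_subset (Finset.subset_univ _)
    intro i _ hi
    simp only [Finset.mem_union, hs, ht, Finset.mem_filter, Finset.mem_univ, true_and,
      not_or, not_lt] at hi
    have : x i = 0 := le_antisymm hi.1 hi.2
    simp [this]
  by_cases hse : s = ∅
  · -- all x i ≤ 0 and sum zero ⇒ all zero
    have hall : ∀ i, x i = 0 := by
      intro i
      have hnonpos : ∀ j : Fin k, j ∈ Finset.univ → 0 ≤ -x j := by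
        intro j _
        by_contra h
        push_neg at h
        have : j ∈ s := by simp [hs]; linarith
        simp [hse] at this
      have hzero : ∑ j : Fin k, -x j = 0 := by simp [hsum]
      have := (Finset.sum_eq_zero_iff_of_nonneg hnonpos).mp hzero i (Finset.mem_univ i)
      linarith
    have : ∑ i, (x i) ^ 2 = 0 := by
      apply Finset.sum_eq_zero; intro i _; simp [hall i]
    rw [this]
    apply div_nonneg _ (by positivity)
    have : (1 : ℝ) ≤ (ξ : ℝ) := by exact_mod_cast hξ
    nlinarith
  · have hs1 : 1 ≤ s.card := Finset.card_pos.mpr (Finset.nonempty_of_ne_empty hse)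
    have htξ : (t.card : ℝ) ≤ (ξ : ℝ) - 1 := by
      have : t.card + 1 ≤ ξ := by omega
      have := (Nat.cast_le (α := ℝ)).mpr this
      push_cast at this
      linarith
    -- P ≤ t.card / d
    have hPle : P ≤ (t.card : ℝ) * (1 / d) := by
      have : P = ∑ i ∈ t, (-x i) := by rw [Finset.sum_neg_distrib, hsumt, neg_neg]
      rw [this]
      calc ∑ i ∈ t, (-x i) ≤ ∑ i ∈ t, (1 / d) := by
            apply Finset.sum_le_sum; intro i _; linarith [hx i]
        _ = (t.card : ℝ) * (1 / d) := by rw [Finset.sum_const, nsmul_eq_mul]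
    -- bound on s: each x i ≤ P
    have hxleP : ∀ i ∈ s, x i ≤ P := by
      intro i hi
      exact Finset.single_le_sum (f := x) (fun j hj => le_of_lt (by simpa [hs] using hj)) hi
    have hssq : ∑ i ∈ s, (x i) ^ 2 ≤ P * P := by
      calc ∑ i ∈ s, (x i) ^ 2 ≤ ∑ i ∈ s, P * x i := by
            apply Finset.sum_le_sum
            intro i hi
            have h1 : 0 < x i := by simpa [hs] using hi
            nlinarith [hxleP i hi]
        _ = P * P := by rw [← Finset.mul_sum]
    have htsq : ∑ i ∈ t, (x i) ^ 2 ≤ (1 / d) * P := by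
      calc ∑ i ∈ t, (x i) ^ 2 ≤ ∑ i ∈ t, (1 / d) * (-x i) := by
            apply Finset.sum_le_sum
            intro i hi
            have h1 : x i < 0 := by simpa [ht] using hi
            nlinarith [hx i]
        _ = (1 / d) * P := by
            rw [← Finset.mul_sum, Finset.sum_neg_distrib, hsumt, neg_neg]
    rw [hsq, Finset.sum_union hdisj]
    have hd2 : (0:ℝ) < d ^ 2 := by positivity
    have key : (P * P + (1 / d) * P) * d ^ 2 ≤ (ξ : ℝ) * ((ξ : ℝ) - 1) := by
      have hq : 0 ≤ P * d := by positivity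
      have hq2 : P * d ≤ (t.card : ℝ) := by
        have := mul_le_mul_of_nonneg_right hPle (le_of_lt hd)
        field_simp at this ⊢
        linarith
      have ht0 : (0:ℝ) ≤ (t.card : ℝ) := Nat.cast_nonneg _
      have h1d : (1/d) * P * d ^ 2 = P * d := by field_simp
      nlinarith [sq_nonneg (P * d - (t.card : ℝ))]
    calc ∑ i ∈ s, x i ^ 2 + ∑ i ∈ t, x i ^ 2 ≤ P * P + (1/d) * P := by linarith
      _ ≤ (ξ : ℝ) * ((ξ : ℝ) - 1) / d ^ 2 := by
          rw [le_div_iff₀ hd2]; exact key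
end
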